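/- arXiv:2309.09036 — 2 statements merged into one kernel-verified Lean document; each statement's English description precedes it below -/
import Mathlib

section
/- Generalized Gronwall lemma: Suppose y₁ ∈ C([0,T]), y₂, y₃ ∈ L¹([0,T]), a ∈ L^∞([0,T]) are nonnegative and A ≥ 0 satisfies y₁(T') + ∫₀^{T'} y₂ dt ≤ A + ∫₀^{T'} a y₁ dt + ∫₀^{T'} y₃ dt for all T' ∈ [0,T]. Assume further that for some B ≥ 0, β > 0, ∫₀^{T'} y₃ dt ≤ B (sup_{t∈[0,T']} y₁(t)^β) ∫₀^{T'} (y₁ + y₂) dt for all T' ∈ [0,T]. Let E = exp(∫₀^T a dt). If 8AE ≤ (8B(1+T)E)^{−1/β}, then sup_{t∈[0,T]} y₁(t) + ∫₀^T y₂ dt ≤ 8 A E. -/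
open Set intervalIntegral Real

open MeasureTheory Filter


/-- Key FTC-type inequality: for `a ≥ 0` integrable with primitive `Φ`,
`∫₀ᵗ a e^Φ ≤ e^{Φ t} - 1`. -/
lemma integral_mul_exp_primitive_le {T : ℝ} {a : ℝ → ℝ} (hT : 0 ≤ T)
    (hai : IntervalIntegrable a volume 0 T) (ha0 : ∀ t ∈ Icc 0 T, 0 ≤ a t)
    {t : ℝ} (ht : t ∈ Icc 0 T) :
    (∫ s in (0:ℝ)..t, a s * Real.exp (∫ u in (0:ℝ)..s, a u)) ≤
      Real.exp (∫ u in (0:ℝ)..t, a u) - 1 := by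
  set Φ : ℝ → ℝ := fun r => ∫ u in (0:ℝ)..r, a u with hΦdef
  have hmemIcc : ∀ {x : ℝ}, x ∈ Icc 0 T → x ∈ uIcc (0:ℝ) T := by
    intro x hx; rw [uIcc_of_le hT]; exact hx
  have hint : ∀ x ∈ Icc (0:ℝ) T, ∀ z ∈ Icc (0:ℝ) T, IntervalIntegrable a volume x z := by
    intro x hx z hz
    exact hai.mono_set (uIcc_subset_uIcc (hmemIcc hx) (hmemIcc hz))
  have hΦc : ContinuousOn Φ (Icc 0 T) := by
    have := intervalIntegral.continuousOn_primitive_interval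
      (f := a) (a := (0:ℝ)) (b := T) (μ := volume)
      (by rw [uIcc_of_le hT]
          exact (intervalIntegrable_iff_integrableOn_Icc_of_le hT).1 hai)
    rwa [uIcc_of_le hT] at this
  have hΦadd : ∀ x ∈ Icc (0:ℝ) T, ∀ z ∈ Icc (0:ℝ) T, Φ z = Φ x + ∫ u in x..z, a u := by
    intro x hx z hz
    have := intervalIntegral.integral_add_adjacent_intervals
      (hint 0 (left_mem_Icc.2 hT) x hx) (hint x hx z hz)
    simp only [hΦdef]; linarith [this]
  have hΦmono : ∀ x ∈ Icc (0:ℝ) T, ∀ z ∈ Icc (0:ℝ) T, x ≤ z → Φ x ≤ Φ z := by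
    intro x hx z hz hxz
    have h1 := hΦadd x hx z hz
    have h2 : 0 ≤ ∫ u in x..z, a u := by
      apply intervalIntegral.integral_nonneg hxz
      intro u hu
      exact ha0 u ⟨hx.1.trans hu.1, hu.2.trans hz.2⟩
    linarith
  have hprodint : ∀ x ∈ Icc (0:ℝ) T, ∀ z ∈ Icc (0:ℝ) T,
      IntervalIntegrable (fun s => a s * Real.exp (Φ s)) volume x z := by
    intro x hx z hz
    exact (hint x hx z hz).mul_continuousOn
      (Real.continuous_exp.comp_continuousOn
        (hΦc.mono ((uIcc_subset_uIcc (hmemIcc hx) (hmemIcc hz)).trans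
          (by rw [uIcc_of_le hT]))))
  -- small-interval estimate
  have hsmall : ∀ ε : ℝ, 0 ≤ ε → ∀ x ∈ Icc (0:ℝ) T, ∀ z ∈ Icc (0:ℝ) T, x ≤ z →
      Φ z - Φ x ≤ ε →
      (∫ s in x..z, a s * Real.exp (Φ s)) ≤ Real.exp ε * (Real.exp (Φ z) - Real.exp (Φ x)) := by
    intro ε hε x hx z hz hxz hd
    have hstep : (∫ s in x..z, a s * Real.exp (Φ s)) ≤ ∫ s in x..z, a s * Real.exp (Φ z) := by
      apply intervalIntegral.integral_mono_on hxz (hprodint x hx z hz)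
        ((hint x hx z hz).mul_const _)
      intro s hs
      have hsT : s ∈ Icc (0:ℝ) T := ⟨hx.1.trans hs.1, hs.2.trans hz.2⟩
      exact mul_le_mul_of_nonneg_left
        (Real.exp_le_exp.2 (hΦmono s hsT z hz hs.2)) (ha0 s hsT)
    have hval : (∫ s in x..z, a s * Real.exp (Φ z)) = (Φ z - Φ x) * Real.exp (Φ z) := by
      rw [intervalIntegral.integral_mul_const]
      have := hΦadd x hx z hz
      rw [show (∫ u in x..z, a u) = Φ z - Φ x by linarith]
    rw [hval] at hstep
    refine hstep.trans ?_
    set d := Φ z - Φ x with hddef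
    have hd0 : 0 ≤ d := by
      have := hΦmono x hx z hz hxz; simp [hddef]; linarith
    have h2 : d ≤ Real.exp d - 1 := by linarith [Real.add_one_le_exp d]
    have h3 : Real.exp d ≤ Real.exp ε := Real.exp_le_exp.2 hd
    have h4 : d * Real.exp d ≤ (Real.exp d - 1) * Real.exp ε :=
      mul_le_mul h2 h3 (Real.exp_pos d).le (by linarith)
    have hz' : Φ z = Φ x + d := by simp [hddef]
    rw [hz', Real.exp_add]
    calc d * (Real.exp (Φ x) * Real.exp d) = Real.exp (Φ x) * (d * Real.exp d) := by ring
      _ ≤ Real.exp (Φ x) * ((Real.exp d - 1) * Real.exp ε) :=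
          mul_le_mul_of_nonneg_left h4 (Real.exp_pos _).le
      _ = Real.exp ε * (Real.exp (Φ x) * Real.exp d - Real.exp (Φ x)) := by ring
  -- induction on the number of small pieces
  have hind : ∀ (n : ℕ) (ε : ℝ), 0 < ε → ∀ x ∈ Icc (0:ℝ) T, ∀ z ∈ Icc (0:ℝ) T, x ≤ z →
      Φ z - Φ x ≤ n * ε →
      (∫ s in x..z, a s * Real.exp (Φ s)) ≤ Real.exp ε * (Real.exp (Φ z) - Real.exp (Φ x)) := by
    intro n
    induction n with
    | zero =>
      intro ε hε x hx z hz hxz hd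
      exact hsmall ε hε.le x hx z hz hxz (by push_cast at hd; linarith)
    | succ n ih =>
      intro ε hε x hx z hz hxz hd
      by_cases hcase : Φ z - Φ x ≤ ε
      · exact hsmall ε hε.le x hx z hz hxz hcase
      push_neg at hcase
      have hmemi : Φ x + ε ∈ Icc (Φ x) (Φ z) := ⟨by linarith, by linarith⟩
      obtain ⟨m, hm, hΦm⟩ := intermediate_value_Icc hxz
        (hΦc.mono (Icc_subset_Icc hx.1 hz.2)) hmemi
      have hmT : m ∈ Icc (0:ℝ) T := ⟨hx.1.trans hm.1, hm.2.trans hz.2⟩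
      have hsplit := intervalIntegral.integral_add_adjacent_intervals
        (hprodint x hx m hmT) (hprodint m hmT z hz)
      have h1 : (∫ s in x..m, a s * Real.exp (Φ s)) ≤
          Real.exp ε * (Real.exp (Φ m) - Real.exp (Φ x)) :=
        hsmall ε hε.le x hx m hmT hm.1 (by rw [hΦm]; linarith)
      have h2 : (∫ s in m..z, a s * Real.exp (Φ s)) ≤
          Real.exp ε * (Real.exp (Φ z) - Real.exp (Φ m)) := by
        apply ih ε hε m hmT z hz hm.2
        rw [hΦm]; push_cast at hd ⊢; linarith
      rw [← hsplit]
      have : Real.exp ε * (Real.exp (Φ m) - Real.exp (Φ x)) +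
          Real.exp ε * (Real.exp (Φ z) - Real.exp (Φ m)) =
          Real.exp ε * (Real.exp (Φ z) - Real.exp (Φ x)) := by ring
      linarith
  -- conclude by letting ε → 0⁺
  have hΦ0 : Φ 0 = 0 := intervalIntegral.integral_same
  have hgoal : ∀ ε : ℝ, 0 < ε →
      (∫ s in (0:ℝ)..t, a s * Real.exp (Φ s)) ≤ Real.exp ε * (Real.exp (Φ t) - 1) := by
    intro ε hε
    obtain ⟨n, hn⟩ := exists_nat_ge (Φ t / ε)
    have hd : Φ t - Φ 0 ≤ n * ε := by
      rw [hΦ0, sub_zero]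
      rw [div_le_iff₀ hε] at hn
      linarith
    have := hind n ε hε 0 (left_mem_Icc.2 hT) t ht ht.1 hd
    rwa [hΦ0, Real.exp_zero] at this
  have htend : Tendsto (fun ε : ℝ => Real.exp ε * (Real.exp (Φ t) - 1)) (nhdsWithin 0 (Ioi 0))
      (nhds (Real.exp (Φ t) - 1)) := by
    have : Tendsto (fun ε : ℝ => Real.exp ε * (Real.exp (Φ t) - 1)) (nhds 0)
        (nhds (Real.exp 0 * (Real.exp (Φ t) - 1))) :=
      (Real.continuous_exp.tendsto 0).mul tendsto_const_nhds
    rw [Real.exp_zero, one_mul] at this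
    exact this.mono_left nhdsWithin_le_nhds
  exact ge_of_tendsto htend (eventually_mem_nhdsWithin.mono (fun ε hε => hgoal ε hε))

/-- The main bootstrap: conclusion bounded by any admissible constant `c`. -/
lemma gronwall_key (T A B β c : ℝ) (y₁ y₂ y₃ a : ℝ → ℝ)
    (hT : 0 < T) (hA : 0 ≤ A) (hB : 0 ≤ B) (hβ : 0 < β) (hc : 0 < c)
    (hy₁c : ContinuousOn y₁ (Icc 0 T))
    (hy₂i : IntervalIntegrable y₂ MeasureTheory.volume 0 T)
    (hy₃i : IntervalIntegrable y₃ MeasureTheory.volume 0 T)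
    (hai : IntervalIntegrable a MeasureTheory.volume 0 T)
    (hy₁0 : ∀ t ∈ Icc 0 T, 0 ≤ y₁ t) (hy₂0 : ∀ t ∈ Icc 0 T, 0 ≤ y₂ t)
    (hy₃0 : ∀ t ∈ Icc 0 T, 0 ≤ y₃ t) (ha0 : ∀ t ∈ Icc 0 T, 0 ≤ a t)
    (hmain : ∀ T' ∈ Icc 0 T,
      y₁ T' + ∫ t in (0:ℝ)..T', y₂ t ≤
        A + (∫ t in (0:ℝ)..T', a t * y₁ t) + ∫ t in (0:ℝ)..T', y₃ t)
    (hy₃bound : ∀ T' ∈ Icc 0 T,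
      (∫ t in (0:ℝ)..T', y₃ t) ≤
        B * (⨆ t ∈ Icc 0 T', (y₁ t) ^ β) * ∫ t in (0:ℝ)..T', (y₁ t + y₂ t))
    (hAc : 8 * A * Real.exp (∫ t in (0:ℝ)..T, a t) ≤ c)
    (hBc : B * c ^ β * (8 * (1 + T) * Real.exp (∫ t in (0:ℝ)..T, a t)) ≤ 1) :
    (⨆ t ∈ Icc 0 T, y₁ t) + (∫ t in (0:ℝ)..T, y₂ t) ≤ c := by
  set E : ℝ := Real.exp (∫ t in (0:ℝ)..T, a t) with hEdef
  set Φ : ℝ → ℝ := fun r => ∫ u in (0:ℝ)..r, a u with hΦdef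
  set Y₂ : ℝ → ℝ := fun r => ∫ u in (0:ℝ)..r, y₂ u with hY₂def
  set K : ℝ := c / (4 * E) with hKdef
  have hEpos : 0 < E := Real.exp_pos _
  have hmemIcc : ∀ {x : ℝ}, x ∈ Icc 0 T → x ∈ uIcc (0:ℝ) T := by
    intro x hx; rw [uIcc_of_le hT.le]; exact hx
  have hsub : ∀ {x z : ℝ}, x ∈ Icc 0 T → z ∈ Icc 0 T → uIcc x z ⊆ Icc 0 T := by
    intro x z hx hz
    exact (uIcc_subset_uIcc (hmemIcc hx) (hmemIcc hz)).trans (by rw [uIcc_of_le hT.le])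
  have hint : ∀ {f : ℝ → ℝ}, IntervalIntegrable f volume 0 T →
      ∀ {x z : ℝ}, x ∈ Icc 0 T → z ∈ Icc 0 T → IntervalIntegrable f volume x z := by
    intro f hf x z hx hz
    exact hf.mono_set (uIcc_subset_uIcc (hmemIcc hx) (hmemIcc hz))
  have hΦc : ContinuousOn Φ (Icc 0 T) := by
    have := intervalIntegral.continuousOn_primitive_interval
      (f := a) (a := (0:ℝ)) (b := T) (μ := volume)
      (by rw [uIcc_of_le hT.le]
          exact (intervalIntegrable_iff_integrableOn_Icc_of_le hT.le).1 hai)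
    rwa [uIcc_of_le hT.le] at this
  have hY₂c : ContinuousOn Y₂ (Icc 0 T) := by
    have := intervalIntegral.continuousOn_primitive_interval
      (f := y₂) (a := (0:ℝ)) (b := T) (μ := volume)
      (by rw [uIcc_of_le hT.le]
          exact (intervalIntegrable_iff_integrableOn_Icc_of_le hT.le).1 hy₂i)
    rwa [uIcc_of_le hT.le] at this
  have hΦmono : ∀ x ∈ Icc (0:ℝ) T, ∀ z ∈ Icc (0:ℝ) T, x ≤ z → Φ x ≤ Φ z := by
    intro x hx z hz hxz
    have h1 := intervalIntegral.integral_add_adjacent_intervals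
      (hint hai (left_mem_Icc.2 hT.le) hx) (hint hai hx hz)
    have h2 : 0 ≤ ∫ u in x..z, a u := by
      apply intervalIntegral.integral_nonneg hxz
      intro u hu
      exact ha0 u ⟨hx.1.trans hu.1, hu.2.trans hz.2⟩
    simp only [hΦdef]; linarith
  have hΦT : Φ T = ∫ t in (0:ℝ)..T, a t := rfl
  have hexpΦle : ∀ x ∈ Icc (0:ℝ) T, Real.exp (Φ x) ≤ E := by
    intro x hx
    rw [hEdef, ← hΦT]
    exact Real.exp_le_exp.2 (hΦmono x hx T (right_mem_Icc.2 hT.le) hx.2)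
  have hE1 : 1 ≤ E := by
    have : (0:ℝ) ≤ ∫ t in (0:ℝ)..T, a t :=
      intervalIntegral.integral_nonneg hT.le (fun u hu => ha0 u hu)
    calc (1:ℝ) = Real.exp 0 := Real.exp_zero.symm
      _ ≤ E := Real.exp_le_exp.2 this
  have hKpos : 0 < K := by
    rw [hKdef]; positivity
  have hA_le : A ≤ K / 2 := by
    rw [hKdef, div_div, le_div_iff₀ (by positivity)]
    nlinarith [hAc]
  have hY₂nonneg : ∀ x ∈ Icc (0:ℝ) T, 0 ≤ Y₂ x := by
    intro x hx
    apply intervalIntegral.integral_nonneg hx.1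
    intro u hu
    exact hy₂0 u ⟨hu.1, hu.2.trans hx.2⟩
  have h2KE : 2 * K * E = c / 2 := by
    rw [hKdef]; field_simp; ring
  have hΦ0 : Φ 0 = 0 := intervalIntegral.integral_same
  have hY₂0 : Y₂ 0 = 0 := intervalIntegral.integral_same
  -- The bootstrap set
  set S : Set ℝ := {r ∈ Icc (0:ℝ) T | ∀ u ∈ Icc (0:ℝ) r, y₁ u + Y₂ u ≤ 2 * K * Real.exp (Φ u)}
    with hSdef
  have h0S : (0:ℝ) ∈ S := by
    constructor
    · exact left_mem_Icc.2 hT.le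
    · intro u hu
      have hu0 : u = 0 := le_antisymm hu.2 hu.1
      subst hu0
      have := hmain 0 (left_mem_Icc.2 hT.le)
      simp only [intervalIntegral.integral_same] at this
      rw [hY₂0, hΦ0, Real.exp_zero]
      have : y₁ 0 ≤ A := by linarith
      linarith [hA_le, hKpos.le]
  -- The improvement step
  have himp : ∀ r ∈ S, ∀ u ∈ Icc (0:ℝ) r,
      y₁ u + Y₂ u ≤ 2 * K * Real.exp (Φ u) - K := by
    intro r hr u hu
    have hrT : r ∈ Icc (0:ℝ) T := hr.1
    have huT : u ∈ Icc (0:ℝ) T := ⟨hu.1, hu.2.trans hrT.2⟩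
    have hY₁bd : ∀ s ∈ Icc (0:ℝ) u, y₁ s ≤ 2 * K * Real.exp (Φ s) := by
      intro s hs
      have hsr : s ∈ Icc (0:ℝ) r := ⟨hs.1, hs.2.trans hu.2⟩
      have hsT : s ∈ Icc (0:ℝ) T := ⟨hs.1, hsr.2.trans hrT.2⟩
      have := hr.2 s hsr
      linarith [hY₂nonneg s hsT]
    have hy₁lec : ∀ s ∈ Icc (0:ℝ) u, y₁ s ≤ c := by
      intro s hs
      have hsT : s ∈ Icc (0:ℝ) T := ⟨hs.1, hs.2.trans huT.2⟩
      have h1 := hY₁bd s hs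
      have h2 : 2 * K * Real.exp (Φ s) ≤ 2 * K * E :=
        mul_le_mul_of_nonneg_left (hexpΦle s hsT) (by linarith [hKpos.le])
      rw [h2KE] at h2
      linarith
    -- bound on ∫ a y₁
    have hay₁ : (∫ s in (0:ℝ)..u, a s * y₁ s) ≤ 2 * K * (Real.exp (Φ u) - 1) := by
      have hstep : (∫ s in (0:ℝ)..u, a s * y₁ s) ≤
          ∫ s in (0:ℝ)..u, 2 * K * (a s * Real.exp (Φ s)) := by
        apply intervalIntegral.integral_mono_on huT.1
        · exact (hint hai (left_mem_Icc.2 hT.le) huT).mul_continuousOn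
            (hy₁c.mono (hsub (left_mem_Icc.2 hT.le) huT))
        · exact (((hint hai (left_mem_Icc.2 hT.le) huT).mul_continuousOn
            (Real.continuous_exp.comp_continuousOn
              (hΦc.mono (hsub (left_mem_Icc.2 hT.le) huT)))).const_mul _)
        · intro s hs
          have hsT : s ∈ Icc (0:ℝ) T := ⟨hs.1, hs.2.trans huT.2⟩
          have := mul_le_mul_of_nonneg_left (hY₁bd s hs) (ha0 s hsT)
          calc a s * y₁ s ≤ a s * (2 * K * Real.exp (Φ s)) := this
            _ = 2 * K * (a s * Real.exp (Φ s)) := by ring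
      rw [intervalIntegral.integral_const_mul] at hstep
      have hkey := integral_mul_exp_primitive_le hT.le hai ha0 huT
      calc (∫ s in (0:ℝ)..u, a s * y₁ s) ≤
          2 * K * ∫ s in (0:ℝ)..u, a s * Real.exp (Φ s) := hstep
        _ ≤ 2 * K * (Real.exp (Φ u) - 1) :=
            mul_le_mul_of_nonneg_left hkey (by linarith [hKpos.le])
    -- bound on ∫ y₃
    have hy₃u : (∫ s in (0:ℝ)..u, y₃ s) ≤ K / 2 := by
      have hb := hy₃bound u huT
      have hsupb : (⨆ s ∈ Icc (0:ℝ) u, (y₁ s) ^ β) ≤ c ^ β := by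
        apply Real.iSup_le _ (Real.rpow_nonneg hc.le β)
        intro s
        apply Real.iSup_le _ (Real.rpow_nonneg hc.le β)
        intro hs
        exact Real.rpow_le_rpow (hy₁0 s ⟨hs.1, hs.2.trans huT.2⟩) (hy₁lec s hs) hβ.le
      have hsup0 : 0 ≤ ⨆ s ∈ Icc (0:ℝ) u, (y₁ s) ^ β := by
        apply Real.iSup_nonneg
        intro s
        apply Real.iSup_nonneg
        intro hs
        exact Real.rpow_nonneg (hy₁0 s ⟨hs.1, hs.2.trans huT.2⟩) β
      have hy₁y₂int : (∫ s in (0:ℝ)..u, (y₁ s + y₂ s)) ≤ (1 + T) * c := by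
        have hy₁int : IntervalIntegrable y₁ volume 0 u :=
          (hy₁c.mono (hsub (left_mem_Icc.2 hT.le) huT)).intervalIntegrable
        have hy₂int : IntervalIntegrable y₂ volume 0 u :=
          hint hy₂i (left_mem_Icc.2 hT.le) huT
        rw [intervalIntegral.integral_add hy₁int hy₂int]
        have h1 : (∫ s in (0:ℝ)..u, y₁ s) ≤ ∫ s in (0:ℝ)..u, c := by
          apply intervalIntegral.integral_mono_on huT.1 hy₁int intervalIntegrable_const
          exact hy₁lec
        rw [intervalIntegral.integral_const, smul_eq_mul, sub_zero] at h1
        have h2 : Y₂ u ≤ c := by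
          have := hr.2 u hu
          have h3 : 2 * K * Real.exp (Φ u) ≤ 2 * K * E :=
            mul_le_mul_of_nonneg_left (hexpΦle u huT) (by linarith [hKpos.le])
          rw [h2KE] at h3
          linarith [hy₁0 u huT]
        have hu_le : u * c ≤ T * c := mul_le_mul_of_nonneg_right huT.2 hc.le
        have : (∫ s in (0:ℝ)..u, y₂ s) = Y₂ u := rfl
        rw [this]
        nlinarith
      have hints : 0 ≤ ∫ s in (0:ℝ)..u, (y₁ s + y₂ s) := by
        apply intervalIntegral.integral_nonneg huT.1
        intro s hs
        have hsT : s ∈ Icc (0:ℝ) T := ⟨hs.1, hs.2.trans huT.2⟩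
        exact add_nonneg (hy₁0 s hsT) (hy₂0 s hsT)
      have hchain : B * (⨆ s ∈ Icc (0:ℝ) u, (y₁ s) ^ β) * (∫ s in (0:ℝ)..u, (y₁ s + y₂ s)) ≤
          B * c ^ β * ((1 + T) * c) := by
        apply mul_le_mul (mul_le_mul_of_nonneg_left hsupb hB) hy₁y₂int hints
        positivity
      have hfin : B * c ^ β * ((1 + T) * c) ≤ K / 2 := by
        have hKe : K / 2 = c / (8 * E) := by rw [hKdef]; ring
        rw [hKe, le_div_iff₀ (by positivity)]
        calc B * c ^ β * ((1 + T) * c) * (8 * E)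
            = (B * c ^ β * (8 * (1 + T) * E)) * c := by ring
          _ ≤ 1 * c := mul_le_mul_of_nonneg_right hBc hc.le
          _ = c := one_mul c
      linarith
    have hm := hmain u huT
    have : (∫ t in (0:ℝ)..u, y₂ t) = Y₂ u := rfl
    rw [this] at hm
    linarith
  -- sSup argument
  have hSbdd : BddAbove S := ⟨T, fun r hr => hr.1.2⟩
  set τ : ℝ := sSup S with hτdef
  have hτ0 : 0 ≤ τ := le_csSup hSbdd h0S
  have hτT : τ ≤ T := csSup_le ⟨0, h0S⟩ (fun r hr => hr.1.2)
  have hτIcc : τ ∈ Icc (0:ℝ) T := ⟨hτ0, hτT⟩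
  have hlt : ∀ u ∈ Ico (0:ℝ) τ, y₁ u + Y₂ u ≤ 2 * K * Real.exp (Φ u) := by
    intro u hu
    obtain ⟨r, hrS, hur⟩ := exists_lt_of_lt_csSup ⟨0, h0S⟩ hu.2
    exact hrS.2 u ⟨hu.1, hur.le⟩
  have hgc : ContinuousOn (fun u => y₁ u + Y₂ u - 2 * K * Real.exp (Φ u)) (Icc 0 T) :=
    (hy₁c.add hY₂c).sub ((continuousOn_const).mul
      (Real.continuous_exp.comp_continuousOn hΦc))
  have hτS : τ ∈ S := by
    refine ⟨hτIcc, fun u hu => ?_⟩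
    rcases eq_or_lt_of_le hu.2 with heq | hlt'
    · by_cases hτz : u = 0
      · rw [hτz]
        exact h0S.2 0 ⟨le_refl 0, le_refl 0⟩
      · have h0 : 0 < u := lt_of_le_of_ne hu.1 (Ne.symm hτz)
        have hne : (nhdsWithin u (Ico 0 u)).NeBot := by
          rw [← mem_closure_iff_nhdsWithin_neBot, closure_Ico h0.ne]
          exact ⟨hu.1, le_refl u⟩
        have htd : Tendsto (fun v => y₁ v + Y₂ v - 2 * K * Real.exp (Φ v))
            (nhdsWithin u (Ico 0 u))
            (nhds (y₁ u + Y₂ u - 2 * K * Real.exp (Φ u))) := by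
          apply (hgc u ⟨hu.1, hu.2.trans hτT⟩).mono_left
          apply nhdsWithin_mono
          intro v hv
          exact ⟨hv.1, hv.2.le.trans (hu.2.trans hτT)⟩
        have hle : ∀ᶠ v in nhdsWithin u (Ico 0 u),
            y₁ v + Y₂ v - 2 * K * Real.exp (Φ v) ≤ 0 := by
          apply eventually_mem_nhdsWithin.mono
          intro v hv
          have := hlt v ⟨hv.1, hv.2.trans_le heq.le⟩
          linarith
        have := le_of_tendsto htd hle
        linarith
    · have := hlt u ⟨hu.1, hlt'⟩
      linarith
  -- τ must equal T
  have hτeqT : τ = T := by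
    by_contra hne
    have hτltT : τ < T := lt_of_le_of_ne hτT hne
    have hgτ : y₁ τ + Y₂ τ - 2 * K * Real.exp (Φ τ) ≤ -K := by
      have := himp τ hτS τ ⟨hτ0, le_refl τ⟩
      linarith
    have htd : Tendsto (fun v => y₁ v + Y₂ v - 2 * K * Real.exp (Φ v))
        (nhdsWithin τ (Icc 0 T))
        (nhds (y₁ τ + Y₂ τ - 2 * K * Real.exp (Φ τ))) := hgc τ hτIcc
    have hev : ∀ᶠ v in nhdsWithin τ (Icc 0 T),
        y₁ v + Y₂ v - 2 * K * Real.exp (Φ v) < 0 :=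
      htd.eventually_lt_const (by linarith)
    obtain ⟨δ, hδ0, hball⟩ := Metric.mem_nhdsWithin_iff.1 hev
    set r : ℝ := min (τ + δ / 2) T with hrdef
    have hτr : τ < r := lt_min (by linarith) hτltT
    have hrT : r ∈ Icc (0:ℝ) T := ⟨hτ0.trans hτr.le, min_le_right _ _⟩
    have hrS : r ∈ S := by
      refine ⟨hrT, fun u hu => ?_⟩
      rcases le_or_gt u τ with h | h
      · have := himp τ hτS u ⟨hu.1, h⟩
        linarith
      · have huT : u ∈ Icc (0:ℝ) T := ⟨hu.1, hu.2.trans hrT.2⟩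
        have hub : u ∈ Metric.ball τ δ := by
          rw [Metric.mem_ball, Real.dist_eq, abs_of_pos (by linarith)]
          have : u ≤ τ + δ / 2 := hu.2.trans (min_le_left _ _)
          linarith
        have := hball ⟨hub, huT⟩
        simp only [mem_setOf_eq] at this
        linarith
    have := le_csSup hSbdd hrS
    linarith
  -- conclude
  have hfinal : ∀ u ∈ Icc (0:ℝ) T, y₁ u + Y₂ u ≤ 2 * K * E - K := by
    intro u hu
    have h1 := himp τ hτS u (by rw [hτeqT]; exact hu)
    have h2 : 2 * K * Real.exp (Φ u) ≤ 2 * K * E :=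
      mul_le_mul_of_nonneg_left (hexpΦle u hu) (by linarith [hKpos.le])
    linarith
  have hsup : (⨆ t ∈ Icc (0:ℝ) T, y₁ t) ≤ 2 * K * E - K := by
    have hb : 0 ≤ 2 * K * E - K := by nlinarith [hKpos.le, hE1]
    apply Real.iSup_le _ hb
    intro t
    apply Real.iSup_le _ hb
    intro ht
    have := hfinal t ht
    linarith [hY₂nonneg t ht]
  have hY₂T : Y₂ T ≤ 2 * K * E - K := by
    have := hfinal T (right_mem_Icc.2 hT.le)
    linarith [hy₁0 T (right_mem_Icc.2 hT.le)]
  have h4KE : 4 * K * E = c := by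
    rw [hKdef]; field_simp
  have : (∫ t in (0:ℝ)..T, y₂ t) = Y₂ T := rfl
  rw [this]
  linarith [hKpos.le]

lemma rpow_cond_aux {D c β : ℝ} (hD : 0 < D) (hβ : 0 < β) (hc : 0 ≤ c)
    (h : c ≤ D ^ (-(1 / β))) : c ^ β * D ≤ 1 := by
  have h1 : c ^ β ≤ (D ^ (-(1 / β))) ^ β := Real.rpow_le_rpow hc h hβ.le
  rw [← Real.rpow_mul hD.le] at h1
  have he : -(1 / β) * β = -1 := by field_simp
  rw [he, Real.rpow_neg_one] at h1
  calc c ^ β * D ≤ D⁻¹ * D := mul_le_mul_of_nonneg_right h1 hD.le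
    _ = 1 := inv_mul_cancel₀ hD.ne'

/-- Generalized Gronwall lemma (Bartels, Prop. 6.2). -/
theorem generalized_gronwall (T A B β : ℝ) (y₁ y₂ y₃ a : ℝ → ℝ)
    (hT : 0 < T) (hA : 0 ≤ A) (hB : 0 ≤ B) (hβ : 0 < β)
    (hy₁c : ContinuousOn y₁ (Icc 0 T))
    (hy₂i : IntervalIntegrable y₂ MeasureTheory.volume 0 T)
    (hy₃i : IntervalIntegrable y₃ MeasureTheory.volume 0 T)
    (hai : IntervalIntegrable a MeasureTheory.volume 0 T)
    (hy₁0 : ∀ t ∈ Icc 0 T, 0 ≤ y₁ t) (hy₂0 : ∀ t ∈ Icc 0 T, 0 ≤ y₂ t)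
    (hy₃0 : ∀ t ∈ Icc 0 T, 0 ≤ y₃ t) (ha0 : ∀ t ∈ Icc 0 T, 0 ≤ a t)
    (hmain : ∀ T' ∈ Icc 0 T,
      y₁ T' + ∫ t in (0:ℝ)..T', y₂ t ≤
        A + (∫ t in (0:ℝ)..T', a t * y₁ t) + ∫ t in (0:ℝ)..T', y₃ t)
    (hy₃bound : ∀ T' ∈ Icc 0 T,
      (∫ t in (0:ℝ)..T', y₃ t) ≤
        B * (⨆ t ∈ Icc 0 T', (y₁ t) ^ β) * ∫ t in (0:ℝ)..T', (y₁ t + y₂ t))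
    (hcond : 8 * A * Real.exp (∫ t in (0:ℝ)..T, a t) ≤
      (8 * B * (1 + T) * Real.exp (∫ t in (0:ℝ)..T, a t)) ^ (-(1 / β))) :
    (⨆ t ∈ Icc 0 T, y₁ t) + (∫ t in (0:ℝ)..T, y₂ t) ≤
      8 * A * Real.exp (∫ t in (0:ℝ)..T, a t) := by
  set E : ℝ := Real.exp (∫ t in (0:ℝ)..T, a t) with hEdef
  have hEpos : 0 < E := Real.exp_pos _
  rcases eq_or_lt_of_le hA with hA0 | hApos
  · -- A = 0 : conclusion is ≤ 0, obtained as a limit of admissible constants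
    rw [← hA0]
    simp only [mul_zero, zero_mul]
    by_contra hcon
    push_neg at hcon
    set L : ℝ := (⨆ t ∈ Icc 0 T, y₁ t) + (∫ t in (0:ℝ)..T, y₂ t) with hLdef
    -- find an admissible c with c ≤ L/2
    have hkey : ∀ c : ℝ, 0 < c → B * c ^ β * (8 * (1 + T) * E) ≤ 1 → L ≤ c := by
      intro c hc hBc
      exact gronwall_key T A B β c y₁ y₂ y₃ a hT hA hB hβ hc hy₁c hy₂i hy₃i hai
        hy₁0 hy₂0 hy₃0 ha0 hmain hy₃bound (by rw [← hA0]; simp; positivity) hBc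
    rcases eq_or_lt_of_le hB with hB0 | hBpos
    · have := hkey (L / 2) (by linarith) (by rw [← hB0]; simp)
      linarith
    · set D : ℝ := 8 * B * (1 + T) * E with hDdef
      have hDpos : 0 < D := by positivity
      set c : ℝ := min (L / 2) (D ^ (-(1 / β))) with hcdef
      have hcpos : 0 < c := lt_min (by linarith) (Real.rpow_pos_of_pos hDpos _)
      have hc2 : c ≤ D ^ (-(1 / β)) := min_le_right _ _
      have hBc : B * c ^ β * (8 * (1 + T) * E) ≤ 1 := by
        have := rpow_cond_aux hDpos hβ hcpos.le hc2
        calc B * c ^ β * (8 * (1 + T) * E) = c ^ β * D := by rw [hDdef]; ring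
          _ ≤ 1 := this
      have := hkey c hcpos hBc
      have := min_le_left (L / 2) (D ^ (-(1 / β)))
      linarith
  · -- A > 0 : apply the key lemma with c = 8 A E
    have hBpos : 0 < B := by
      rcases eq_or_lt_of_le hB with hB0 | h
      · exfalso
        rw [← hB0] at hcond
        have hz : (8 * 0 * (1 + T) * E) ^ (-(1 / β)) = 0 := by
          rw [mul_zero, zero_mul, zero_mul]
          exact Real.zero_rpow (by simp [ne_of_gt hβ])
        rw [hz] at hcond
        nlinarith
      · exact h
    have hDpos : 0 < 8 * B * (1 + T) * E := by positivity
    have hBc : B * (8 * A * E) ^ β * (8 * (1 + T) * E) ≤ 1 := by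
      have h1 : (8 * A * E) ^ β * (8 * B * (1 + T) * E) ≤ 1 :=
        rpow_cond_aux hDpos hβ (by positivity) hcond
      calc B * (8 * A * E) ^ β * (8 * (1 + T) * E)
          = (8 * A * E) ^ β * (8 * B * (1 + T) * E) := by ring
        _ ≤ 1 := h1
    exact gronwall_key T A B β (8 * A * E) y₁ y₂ y₃ a hT hA hB hβ (by positivity)
      hy₁c hy₂i hy₃i hai hy₁0 hy₂0 hy₃0 ha0 hmain hy₃bound le_rfl hBc
end

section
/- If the conditional stability estimate sup_{t∈[0,T]} ‖ρ(t)−ρ̄(t)‖²_{L²} ≤ M holds for some finite M and ‖ρ̄‖_{L^∞(0,T;L²)} is finite, and if the maximal existence time T_max of the weak solution ρ satisfies T_max ≤ T, then ‖ρ(t)‖_{L²} is uniformly bounded on [0, T_max), contradicting the L² blow-up of ρ at T_max; hence T_max > T. -/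
open Set Filter

/-- A posteriori verification of existence (Corollary 3.3). Here `nρ t = ‖ρ(t)‖_{L²}`,
`nρbar t = ‖ρ̄(t)‖_{L²}`, and `e t = ‖ρ(t)−ρ̄(t)‖_{L²}`. If the conditional stability
estimate `sup_t e(t)² ≤ M` holds with finite `M`, `‖ρ̄‖_{L^∞(0,T;L²)} ≤ Mbar` is
finite, and the `L²` norm of `ρ` blows up at the maximal existence time `Tmax`
whenever `Tmax ≤ T` (the blow-up criterion for `d ≤ 3`), then `Tmax > T`. -/
theorem a_posteriori_existence (T Tmax M Mbar : ℝ) (nρ nρbar e : ℝ → ℝ)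
    (hT : 0 < T) (hTmax : 0 < Tmax) (hM : 0 ≤ M) (hMbar : 0 ≤ Mbar)
    (hnρ0 : ∀ t, 0 ≤ nρ t) (hnρbar0 : ∀ t, 0 ≤ nρbar t) (he0 : ∀ t, 0 ≤ e t)
    -- triangle inequality ‖ρ(t)‖ ≤ ‖ρ(t)−ρ̄(t)‖ + ‖ρ̄(t)‖
    (htri : ∀ t ∈ Icc 0 T, nρ t ≤ e t + nρbar t)
    -- the conditional stability estimate: sup over [0,T] of the squared error is ≤ M
    (hstab : ∀ t ∈ Icc 0 T, (e t) ^ 2 ≤ M)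
    -- ‖ρ̄‖_{L^∞(0,T;L²)} finite
    (hbar : ∀ t ∈ Icc 0 T, nρbar t ≤ Mbar)
    -- blow-up criterion: if Tmax ≤ T then the L² norm of ρ blows up as t → Tmax⁻
    (hblow : Tmax ≤ T → Tendsto nρ (nhdsWithin Tmax (Iio Tmax)) atTop) :
    T < Tmax := by
  by_contra h
  push_neg at h
  have hb := hblow h
  -- bound: on [0, T], nρ ≤ √M + Mbar
  have hbound : ∀ t ∈ Icc 0 T, nρ t ≤ Real.sqrt M + Mbar + 1 := by
    intro t ht
    have h1 : e t ≤ Real.sqrt M := by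
      have := hstab t ht
      calc e t = Real.sqrt ((e t) ^ 2) := by
            rw [Real.sqrt_sq (he0 t)]
        _ ≤ Real.sqrt M := Real.sqrt_le_sqrt this
    linarith [htri t ht, hbar t ht]
  -- eventually nρ t > √M + Mbar + 1 near Tmax from the left
  have hev : ∀ᶠ t in nhdsWithin Tmax (Iio Tmax), Real.sqrt M + Mbar + 1 < nρ t :=
    hb.eventually (eventually_gt_atTop _)
  -- eventually t ∈ Icc 0 T near Tmax from the left
  have hev2 : ∀ᶠ t in nhdsWithin Tmax (Iio Tmax), t ∈ Icc 0 T := by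
    filter_upwards [Ioo_mem_nhdsLT_of_mem (show Tmax ∈ Ioc 0 Tmax from ⟨hTmax, le_refl _⟩)]
      with t ht
    exact ⟨le_of_lt ht.1, le_trans (le_of_lt ht.2) h⟩
  have : (nhdsWithin Tmax (Iio Tmax)).NeBot := by
    exact nhdsLT_neBot Tmax
  obtain ⟨t, h1, h2⟩ := (hev.and hev2).exists
  exact absurd (hbound t h2) (not_le.mpr h1)
end
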